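/- For every set X ⊆ [0,1] × [0,1] of full two-dimensional Lebesgue measure there exists a perfect set P ⊆ [0,1] such that P × P ⊆ X ∪ Δ, where Δ = {(x,x) : x ∈ [0,1]}. -/

import Mathlib

open Set unitInterval MeasureTheory Metric Filter
open scoped ENNReal Classical


section Select
variable {ι : Type*} [Fintype ι] [DecidableEq ι]

theorem pair_marginal (μ : ι → Measure ℝ) [∀ i, IsProbabilityMeasure (μ i)]
    {i j : ι} (hij : i ≠ j) {S : Set (ℝ × ℝ)} (hS : MeasurableSet S) :
    Measure.pi μ ((fun y => (y i, y j)) ⁻¹' S) = ((μ i).prod (μ j)) S := by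
  have hmeas : Measurable (fun y : ι → ℝ => (y i, y j)) :=
    (measurable_pi_apply i).prodMk (measurable_pi_apply j)
  have hmap : Measure.map (fun y : ι → ℝ => (y i, y j)) (Measure.pi μ) = (μ i).prod (μ j) := by
    refine (Measure.prod_eq fun s t hs ht => ?_).symm
    rw [Measure.map_apply hmeas (hs.prod ht)]
    have : (fun y : ι → ℝ => (y i, y j)) ⁻¹' (s ×ˢ t) =
        Set.pi univ (fun k => if k = i then s else if k = j then t else univ) := by
      ext y
      simp only [Set.mem_preimage, Set.mem_prod, Set.mem_pi, Set.mem_univ, forall_true_left,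
        true_implies]
      constructor
      · rintro ⟨h1, h2⟩ k
        by_cases hki : k = i
        · simp [hki, h1]
        · by_cases hkj : k = j
          · subst hkj
            simp only [if_neg hki, if_pos rfl]
            exact h2
          · simp [hki, hkj]
      · intro h
        have h1 := h i
        have h2 := h j
        simp only [if_pos rfl] at h1
        rw [if_neg (fun hh => hij hh.symm), if_pos rfl] at h2
        exact ⟨h1, h2⟩
    rw [this, Measure.pi_pi]
    have : ∀ k ∈ (Finset.univ : Finset ι) \ {i, j},
        μ k (if k = i then s else if k = j then t else univ) = 1 := by
      intro k hk
      simp only [Finset.mem_sdiff, Finset.mem_insert, Finset.mem_singleton] at hk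
      push_neg at hk
      simp [hk.2.1, hk.2.2]
    rw [← Finset.prod_subset (Finset.subset_univ ({i, j} : Finset ι))
      (fun k _ hk => by
        simp only [Finset.mem_insert, Finset.mem_singleton] at hk
        push_neg at hk
        simp [hk.1, hk.2])]
    rw [Finset.prod_pair hij]
    simp [hij.symm, if_neg]
  rw [← hmap, Measure.map_apply hmeas hS]

theorem exists_tuple (μ : ι → Measure ℝ) [∀ i, IsProbabilityMeasure (μ i)]
    (Bad : ι → ι → Set (ℝ × ℝ)) (hmeas : ∀ i j, i ≠ j → MeasurableSet (Bad i j))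
    (hsum : ∑ i, ∑ j, (if h : i ≠ j then ((μ i).prod (μ j)) (Bad i j) else 0) < 1) :
    ∃ g : ι → ℝ, ∀ i j, i ≠ j → (g i, g j) ∉ Bad i j := by
  classical
  set E := ⋃ i, ⋃ j, (if h : i ≠ j then (fun y : ι → ℝ => (y i, y j)) ⁻¹' (Bad i j) else ∅)
  have hE : Measure.pi μ E < 1 := by
    calc Measure.pi μ E ≤ ∑ i, ∑ j, (Measure.pi μ
        (if h : i ≠ j then (fun y : ι → ℝ => (y i, y j)) ⁻¹' (Bad i j) else ∅)) := by
          refine (measure_iUnion_fintype_le _ _).trans ?_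
          exact Finset.sum_le_sum fun i _ => measure_iUnion_fintype_le _ _
      _ = ∑ i, ∑ j, (if h : i ≠ j then ((μ i).prod (μ j)) (Bad i j) else 0) := by
          refine Finset.sum_congr rfl fun i _ => Finset.sum_congr rfl fun j _ => ?_
          by_cases h : i ≠ j
          · simp only [dif_pos h]; exact pair_marginal μ h (hmeas i j h)
          · simp [h]
      _ < 1 := hsum
  have huniv : Measure.pi μ univ = 1 := measure_univ
  have : E ≠ univ := fun h => by rw [h, huniv] at hE; exact lt_irrefl _ hE
  obtain ⟨g, hg⟩ : ∃ g : ι → ℝ, g ∉ E := by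
    by_contra h
    push_neg at h
    exact this (eq_univ_of_forall h)
  refine ⟨g, fun i j hij hbad => hg ?_⟩
  refine mem_iUnion.2 ⟨i, mem_iUnion.2 ⟨j, ?_⟩⟩
  rw [dif_pos hij]; exact hbad
end Select


theorem vol_ball2 (p : ℝ × ℝ) {r : ℝ} (hr : 0 < r) :
    volume (closedBall p r) = ENNReal.ofReal (2*r) * ENNReal.ofReal (2*r) := by
  obtain ⟨x, y⟩ := p
  rw [← closedBall_prod_same, Measure.volume_eq_prod, Measure.prod_prod,
    Real.volume_closedBall, Real.volume_closedBall]

theorem vol_ball2_pos (p : ℝ × ℝ) {r : ℝ} (hr : 0 < r) : 0 < volume (closedBall p r) := by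
  rw [vol_ball2 p hr]
  have h2r : (0:ℝ) < 2*r := by linarith
  exact ENNReal.mul_pos (ENNReal.ofReal_pos.2 h2r).ne' (ENNReal.ofReal_pos.2 h2r).ne'

theorem vol_ball2_ne_top (p : ℝ × ℝ) (r : ℝ) : volume (closedBall p r) ≠ ⊤ :=
  (IsCompact.measure_ne_top (isCompact_closedBall p r))

theorem dens_loc {A : Set (ℝ × ℝ)} (hA : MeasurableSet A) {p : ℝ × ℝ}
    (hp : Tendsto (fun r => volume (A ∩ closedBall p r) / volume (closedBall p r))
      (nhdsWithin 0 (Ioi 0)) (nhds 1)) {θ : ℝ≥0∞} (hθ : 0 < θ) :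
    ∃ r₀ > 0, ∀ r, 0 < r → r ≤ r₀ → volume (closedBall p r \ A) ≤ θ * volume (closedBall p r) := by
  have h1 : (1:ℝ≥0∞) - θ < 1 := ENNReal.sub_lt_self ENNReal.one_ne_top one_ne_zero hθ.ne'
  have hev : ∀ᶠ r in nhdsWithin (0:ℝ) (Ioi 0),
      (1:ℝ≥0∞) - θ < volume (A ∩ closedBall p r) / volume (closedBall p r) :=
    hp.eventually (Ioi_mem_nhds h1)
  obtain ⟨ε, hε, hsub⟩ := mem_nhdsGT_iff_exists_Ioo_subset.1 hev
  refine ⟨ε/2, by simpa using hε, fun r hr hrε => ?_⟩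
  have hrmem : r ∈ Ioo (0:ℝ) ε := ⟨hr, lt_of_le_of_lt hrε (by linarith)⟩
  have hrat := hsub hrmem
  set B := closedBall p r
  have hBpos : 0 < volume B := vol_ball2_pos p hr
  have hBtop : volume B ≠ ⊤ := vol_ball2_ne_top p r
  have hAB : (1 - θ) * volume B < volume (A ∩ B) :=
    (ENNReal.lt_div_iff_mul_lt (Or.inl hBpos.ne') (Or.inl hBtop)).1 hrat
  by_contra hcon
  push_neg at hcon
  have hsplit : volume (A ∩ B) + volume (B \ A) = volume B := by
    rw [inter_comm]
    exact measure_inter_add_diff B hA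
  rcases le_or_gt θ 1 with hθ1 | hθ1
  · have : volume B < volume (A ∩ B) + volume (B \ A) := by
      calc volume B = (1 - θ) * volume B + θ * volume B := by
            rw [← add_mul, tsub_add_cancel_of_le hθ1, one_mul]
        _ < volume (A ∩ B) + volume (B \ A) := ENNReal.add_lt_add hAB hcon
    rw [hsplit] at this
    exact lt_irrefl _ this
  · have : volume B < volume (B \ A) := by
      calc volume B = 1 * volume B := (one_mul _).symm
        _ ≤ θ * volume B := mul_le_mul_left hθ1.le _
        _ < volume (B \ A) := hcon
    exact absurd (measure_mono (diff_subset)) (not_le.2 this)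

theorem compact_approx {M : Set (ℝ × ℝ)} (hM : MeasurableSet M) (hM0 : volume M = 0)
    (p : ℝ × ℝ) {r : ℝ} (hr : 0 < r) {θ : ℝ≥0∞} (hθ : 0 < θ) :
    ∃ K : Set (ℝ × ℝ), IsCompact K ∧ K ⊆ closedBall p r ∧ K ∩ M = ∅ ∧
      volume (closedBall p r \ K) ≤ θ * volume (closedBall p r) := by
  set Q := closedBall p r
  have hQmeas : MeasurableSet Q := measurableSet_closedBall
  have hQpos : 0 < volume Q := vol_ball2_pos p hr
  have hQtop : volume Q ≠ ⊤ := vol_ball2_ne_top p r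
  have hA : MeasurableSet (Q \ M) := hQmeas.diff hM
  have hAQ : volume (Q \ M) = volume Q := measure_diff_null hM0
  have hAtop : volume (Q \ M) ≠ ⊤ := by rw [hAQ]; exact hQtop
  have hεne : θ * volume Q ≠ 0 := by
    exact mul_ne_zero hθ.ne' hQpos.ne'
  obtain ⟨K, hKsub, hKcomp, hKlt⟩ := hA.exists_isCompact_lt_add hAtop hεne
  refine ⟨K, hKcomp, hKsub.trans diff_subset, ?_, ?_⟩
  · have : K ⊆ Mᶜ := fun x hx => (hKsub hx).2
    exact eq_empty_of_subset_empty (fun x ⟨h1, h2⟩ => (this h1) h2)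
  · have hKQ : K ⊆ Q := hKsub.trans diff_subset
    have : volume (Q \ K) = volume Q - volume K :=
      measure_diff hKQ hKcomp.isClosed.measurableSet.nullMeasurableSet
        (IsCompact.measure_ne_top hKcomp)
    rw [this, tsub_le_iff_right]
    calc volume Q = volume (Q \ M) := hAQ.symm
      _ ≤ volume K + θ * volume Q := hKlt.le
      _ ≤ θ * volume Q + volume K := by rw [add_comm]


theorem emb_II : MeasurableEmbedding (Prod.map (Subtype.val : I → ℝ) (Subtype.val : I → ℝ)) :=
  (MeasurableEmbedding.subtype_coe measurableSet_Icc).prodMap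
    (MeasurableEmbedding.subtype_coe measurableSet_Icc)

theorem volume_II_eq :
    (volume : Measure (I × I)) = Measure.comap (Prod.map Subtype.val Subtype.val) volume := by
  have hsf : SigmaFinite (volume : Measure I) := inferInstance
  rw [Measure.volume_eq_prod]
  refine Measure.prod_eq fun s t hs ht => ?_
  rw [emb_II.comap_apply]
  have himg : Prod.map (Subtype.val : I → ℝ) (Subtype.val : I → ℝ) '' (s ×ˢ t)
      = (Subtype.val '' s) ×ˢ (Subtype.val '' t) := by
    rw [Set.prod_image_image_eq]; rfl
  rw [himg, Measure.volume_eq_prod, Measure.prod_prod]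
  rw [volume_def, (MeasurableEmbedding.subtype_coe measurableSet_Icc).comap_apply,
    (MeasurableEmbedding.subtype_coe measurableSet_Icc).comap_apply]

theorem null_image {X : Set (I × I)} (hX : volume Xᶜ = 0) :
    volume (Prod.map (Subtype.val : I → ℝ) (Subtype.val : I → ℝ) '' Xᶜ) = 0 := by
  rw [← emb_II.comap_apply, ← volume_II_eq]; exact hX


theorem prod_smul_smul (c d : ℝ≥0∞) (μ ν : Measure ℝ) [IsFiniteMeasure μ] [IsFiniteMeasure ν]
    (hc : c ≠ ⊤) (hd : d ≠ ⊤) :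
    (c • μ).prod (d • ν) = (c * d) • (μ.prod ν) := by
  haveI : SigmaFinite (c • μ) := by
    refine ⟨⟨⟨fun _ => univ, fun _ => trivial, fun _ => ?_, iUnion_const _⟩⟩⟩
    · simp only [Measure.smul_apply, smul_eq_mul]
      exact ENNReal.mul_lt_top hc.lt_top (measure_lt_top μ _)
  haveI : SigmaFinite (d • ν) := by
    refine ⟨⟨⟨fun _ => univ, fun _ => trivial, fun _ => ?_, iUnion_const _⟩⟩⟩
    · simp only [Measure.smul_apply, smul_eq_mul]
      exact ENNReal.mul_lt_top hd.lt_top (measure_lt_top ν _)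
  refine Measure.prod_eq fun s t hs ht => ?_
  simp only [Measure.smul_apply, smul_eq_mul, Measure.prod_prod]
  ring

theorem finite_restrict_ball (x : ℝ) (r : ℝ) :
    IsFiniteMeasure ((volume : Measure ℝ).restrict (closedBall x r)) := by
  constructor
  rw [Measure.restrict_apply_univ, Real.volume_closedBall]
  exact ENNReal.ofReal_lt_top

example (x : ℝ) (r : ℝ) (hr : 0 < r) :
    IsProbabilityMeasure ((ENNReal.ofReal (2*r))⁻¹ • volume.restrict (closedBall x r)) := by
  constructor
  rw [Measure.smul_apply, Measure.restrict_apply_univ, Real.volume_closedBall, smul_eq_mul,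
    ENNReal.inv_mul_cancel]
  · exact (ENNReal.ofReal_pos.2 (by linarith)).ne'
  · exact ENNReal.ofReal_ne_top

theorem vol_diag : volume {p : ℝ × ℝ | p.1 = p.2} = 0 := by
  have hmeas : MeasurableSet {p : ℝ × ℝ | p.1 = p.2} :=
    (isClosed_eq continuous_fst continuous_snd).measurableSet
  rw [Measure.volume_eq_prod, Measure.prod_apply hmeas]
  have : ∀ x : ℝ, (Prod.mk x ⁻¹' {p : ℝ × ℝ | p.1 = p.2}) = {x} := by
    intro x; ext y; simp [eq_comm]
  simp [this]

theorem real_sphere_null (x r : ℝ) : volume (sphere x r) = 0 :=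
  Measure.addHaar_sphere volume x r

noncomputable section
namespace Myc

/-! ### threshold -/

def θ (n : ℕ) : ℝ≥0∞ := (2:ℝ≥0∞)⁻¹ ^ (2*n+3)

theorem θ_pos (n : ℕ) : 0 < θ n := by
  apply ENNReal.pow_pos
  simp

theorem θ_ne_zero (n : ℕ) : θ n ≠ 0 := (θ_pos n).ne'

theorem θ_lt_one (n : ℕ) : θ n < 1 := by
  have h2 : (2:ℝ≥0∞)⁻¹ < 1 := ENNReal.inv_lt_one.2 ENNReal.one_lt_two
  calc θ n ≤ (2:ℝ≥0∞)⁻¹ ^ 1 := pow_le_pow_of_le_one zero_le h2.le (by omega)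
    _ < 1 := by rw [pow_one]; exact h2

/-! ### Stages -/

structure Stage where
  y : (ℕ → Bool) → ℝ
  δ : ℝ
  F : (ℕ → Bool) → (ℕ → Bool) → Set (ℝ × ℝ)

def En (n : ℕ) (v w : ℕ → Bool) : Prop := ∀ i, i < n → v i = w i

theorem En.refl (n : ℕ) (v : ℕ → Bool) : En n v v := fun _ _ => rfl

theorem En.symm {n v w} (h : En n v w) : En n w v := fun i hi => (h i hi).symm

theorem En.trans {n u v w} (h : En n u v) (h' : En n v w) : En n u w :=
  fun i hi => (h i hi).trans (h' i hi)

theorem En.mono {m n v w} (hmn : m ≤ n) (h : En n v w) : En m v w :=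
  fun i hi => h i (lt_of_lt_of_le hi hmn)

def J (S : Stage) (w : ℕ → Bool) : Set ℝ := closedBall (S.y w) S.δ

def Rect (S : Stage) (v w : ℕ → Bool) : Set (ℝ × ℝ) := closedBall ((S.y v, S.y w)) S.δ

theorem rect_prod (S : Stage) (v w : ℕ → Bool) : Rect S v w = J S v ×ˢ J S w :=
  (closedBall_prod_same _ _ _).symm

structure Good (M : Set (ℝ × ℝ)) (n : ℕ) (S : Stage) : Prop where
  δpos : 0 < S.δ
  δle : S.δ ≤ (2:ℝ)⁻¹ ^ n
  inv_y : ∀ v w, En n v w → S.y v = S.y w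
  inv_F : ∀ v v' w w', En n v v' → En n w w' → S.F v w = S.F v' w'
  inside : ∀ w, J S w ⊆ Icc (0:ℝ) 1
  disj : ∀ v w, ¬ En n v w → Disjoint (J S v) (J S w)
  Fclosed : ∀ v w, ¬ En n v w → IsClosed (S.F v w)
  Favoid : ∀ v w, ¬ En n v w → S.F v w ∩ M = ∅
  Fdense : ∀ v w, ¬ En n v w →
    volume (Rect S v w \ S.F v w) ≤ θ n * volume (Rect S v w)

structure Ref (n : ℕ) (S T : Stage) : Prop where
  nest : ∀ w, J T w ⊆ J S w
  Feq : ∀ v w, ¬ En n v w → T.F v w = S.F v w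

/-! ### nodes -/

def rep (n : ℕ) (s : Fin n → Bool) : ℕ → Bool := fun i => if h : i < n then s ⟨i, h⟩ else false

def proj (n : ℕ) (v : ℕ → Bool) : Fin n → Bool := fun i => v i

theorem en_rep_proj (n : ℕ) (v : ℕ → Bool) : En n (rep n (proj n v)) v := by
  intro i hi
  simp [rep, proj, hi]

theorem en_of_proj_eq {n : ℕ} {v w : ℕ → Bool} (h : proj n v = proj n w) : En n v w := by
  intro i hi
  have := congrFun h ⟨i, hi⟩
  simpa [proj] using this

theorem proj_eq_of_en {n : ℕ} {v w : ℕ → Bool} (h : En n v w) : proj n v = proj n w := by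
  funext i
  exact h i i.2

theorem not_en_rep {n : ℕ} {s t : Fin n → Bool} (h : s ≠ t) : ¬ En n (rep n s) (rep n t) := by
  intro hen
  apply h
  funext i
  have := hen i i.2
  simpa [rep, i.2] using this

/-! ### base stage -/

def S0 : Stage := ⟨fun _ => 1/2, 1/2, fun _ _ => ∅⟩

theorem en_zero (v w : ℕ → Bool) : En 0 v w := fun i hi => absurd hi (Nat.not_lt_zero i)

theorem good_base (M : Set (ℝ × ℝ)) : Good M 0 S0 := by
  refine ⟨by norm_num [S0], by norm_num [S0], fun _ _ _ => rfl, fun _ _ _ _ _ _ => rfl,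
    ?_, ?_, ?_, ?_, ?_⟩
  · intro w
    rw [J, S0, Real.closedBall_eq_Icc]
    norm_num
  all_goals intro v w h; exact absurd (en_zero v w) h

theorem step (M : Set (ℝ × ℝ)) (hM : MeasurableSet M) (hM0 : volume M = 0)
    (n : ℕ) (S : Stage) (hS : Good M n S) :
    ∃ T : Stage, Good M (n+1) T ∧ Ref n S T := by
  classical
  obtain ⟨δpos, δle, inv_y, inv_F, inside, disj, Fclosed, Favoid, Fdense⟩ := hS
  set ι := (Fin n → Bool) × Bool with hι
  haveI : Nonempty ι := ⟨(fun _ => false, false)⟩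
  set ctr : ι → ℝ := fun i => S.y (rep n i.1) with hctr
  set Jb : ι → Set ℝ := fun i => closedBall (ctr i) S.δ with hJb
  set c : ℝ≥0∞ := (ENNReal.ofReal (2*S.δ))⁻¹ with hc
  have h2δ : (0:ℝ) < 2*S.δ := by linarith
  have hoR_pos : 0 < ENNReal.ofReal (2*S.δ) := ENNReal.ofReal_pos.2 h2δ
  have hoR_ne_top : ENNReal.ofReal (2*S.δ) ≠ ⊤ := ENNReal.ofReal_ne_top
  have hc_ne_top : c ≠ ⊤ := by rw [hc]; exact ENNReal.inv_ne_top.2 hoR_pos.ne'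
  have hcancel : c * ENNReal.ofReal (2*S.δ) = 1 := ENNReal.inv_mul_cancel hoR_pos.ne' hoR_ne_top
  set ν : ι → Measure ℝ := fun i => c • volume.restrict (Jb i) with hν
  haveI hfin : ∀ i : ι, IsFiniteMeasure (volume.restrict (Jb i)) := fun i => finite_restrict_ball _ _
  haveI hprob : ∀ i : ι, IsProbabilityMeasure (ν i) := by
    intro i
    constructor
    rw [hν]
    simp only [Measure.smul_apply, smul_eq_mul]
    rw [Measure.restrict_apply_univ, hJb, Real.volume_closedBall, hc,
      ENNReal.inv_mul_cancel hoR_pos.ne' hoR_ne_top]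
  set A : (Fin n → Bool) → (Fin n → Bool) → Set (ℝ × ℝ) := fun u v =>
    S.F (rep n u) (rep n v) ∩ Rect S (rep n u) (rep n v) with hA
  have hAmeas : ∀ u v, u ≠ v → MeasurableSet (A u v) := fun u v huv =>
    ((Fclosed _ _ (not_en_rep huv)).measurableSet).inter measurableSet_closedBall
  have hAsm : ∀ u v, u ≠ v →
      volume (Rect S (rep n u) (rep n v) \ A u v) ≤ θ n * volume (Rect S (rep n u) (rep n v)) := by
    intro u v huv
    have heq : Rect S (rep n u) (rep n v) \ A u v
        = Rect S (rep n u) (rep n v) \ S.F (rep n u) (rep n v) := by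
      rw [hA, Set.diff_inter, Set.diff_self, union_empty]
    rw [heq]
    exact Fdense _ _ (not_en_rep huv)
  set Dn : (Fin n → Bool) → (Fin n → Bool) → Set (ℝ × ℝ) := fun u v =>
    {p | Tendsto (fun r => volume (A u v ∩ closedBall p r) / volume (closedBall p r))
      (nhdsWithin 0 (Ioi 0)) (nhds 1)} with hDn
  have hDnull : ∀ u v, u ≠ v → volume (A u v \ Dn u v) = 0 := by
    intro u v huv
    have h := Besicovitch.ae_tendsto_measure_inter_div_of_measurableSet volume (hAmeas u v huv)
    rw [ae_iff] at h
    refine measure_mono_null (fun p hp => ?_) h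
    simp only [mem_setOf_eq]
    intro hcon
    have hind : (A u v).indicator (1 : (ℝ × ℝ) → ℝ≥0∞) p = 1 := by
      rw [Set.indicator_of_mem hp.1]; rfl
    rw [hind] at hcon
    exact hp.2 hcon
  set diag : Set (ℝ × ℝ) := {p | p.1 = p.2} with hdiag
  set core : ι → ι → Set (ℝ × ℝ) := fun i j =>
    if i.1 = j.1 then ∅ else
      toMeasurable volume ((Rect S (rep n i.1) (rep n j.1) \ A i.1 j.1) ∪ (A i.1 j.1 \ Dn i.1 j.1))
    with hcore
  set Bad : ι → ι → Set (ℝ × ℝ) := fun i j =>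
    core i j ∪ (Jb i ×ˢ Jb j)ᶜ ∪ diag ∪ (sphere (ctr i) S.δ ×ˢ (univ : Set ℝ)) ∪
      ((univ : Set ℝ) ×ˢ sphere (ctr j) S.δ) with hBad
  have hBadMeas : ∀ i j : ι, i ≠ j → MeasurableSet (Bad i j) := by
    intro i j _
    rw [hBad]
    refine ((((?_ : MeasurableSet _).union ?_).union ?_).union ?_).union ?_
    · by_cases h : i.1 = j.1
      · rw [hcore]; simp only [if_pos h]; exact MeasurableSet.empty
      · rw [hcore]; simp only [if_neg h]; exact measurableSet_toMeasurable _ _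
    · exact (measurableSet_closedBall.prod measurableSet_closedBall).compl
    · exact (isClosed_eq continuous_fst continuous_snd).measurableSet
    · exact (isClosed_sphere.measurableSet).prod MeasurableSet.univ
    · exact MeasurableSet.univ.prod (isClosed_sphere.measurableSet)
  have hprod : ∀ i j : ι, (ν i).prod (ν j)
      = (c*c) • ((volume : Measure (ℝ×ℝ)).restrict (Jb i ×ˢ Jb j)) := by
    intro i j
    rw [hν]
    simp only
    rw [prod_smul_smul c c _ _ hc_ne_top hc_ne_top, Measure.prod_restrict,
      ← Measure.volume_eq_prod]
  have hRectvol : ∀ i j : ι,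
      volume (Rect S (rep n i.1) (rep n j.1)) = ENNReal.ofReal (2*S.δ) * ENNReal.ofReal (2*S.δ) :=
    fun i j => vol_ball2 _ δpos
  have hBadLe : ∀ i j : ι, i ≠ j → ((ν i).prod (ν j)) (Bad i j) ≤ θ n := by
    intro i j hij
    rw [hprod i j]
    simp only [Measure.smul_apply, smul_eq_mul]
    rw [Measure.restrict_apply (hBadMeas i j hij)]
    have hcorele : volume (core i j) ≤ θ n * (ENNReal.ofReal (2*S.δ) * ENNReal.ofReal (2*S.δ)) := by
      by_cases h : i.1 = j.1
      · rw [hcore]; simp only [if_pos h]; simp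
      · rw [hcore]; simp only [if_neg h]
        rw [measure_toMeasurable]
        refine (measure_union_le _ _).trans ?_
        rw [hDnull i.1 j.1 h, add_zero]
        refine (hAsm i.1 j.1 h).trans ?_
        rw [hRectvol i j]
    have hsub : Bad i j ∩ (Jb i ×ˢ Jb j) ⊆
        core i j ∪ diag ∪ (sphere (ctr i) S.δ ×ˢ Jb j) ∪ (Jb i ×ˢ sphere (ctr j) S.δ) := by
      rintro p ⟨hp, hpR⟩
      rw [hBad] at hp
      rcases hp with ((((h|h)|h)|h)|h)
      · exact Or.inl (Or.inl (Or.inl h))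
      · exact absurd hpR h
      · exact Or.inl (Or.inl (Or.inr h))
      · exact Or.inl (Or.inr ⟨h.1, hpR.2⟩)
      · exact Or.inr ⟨hpR.1, h.2⟩
    have hb : volume (Bad i j ∩ (Jb i ×ˢ Jb j))
        ≤ θ n * (ENNReal.ofReal (2*S.δ) * ENNReal.ofReal (2*S.δ)) := by
      refine (measure_mono hsub).trans ?_
      refine (measure_union_le _ _).trans ?_
      refine (add_le_add_left (measure_union_le _ _) _).trans ?_
      refine (add_le_add_left (add_le_add_left (measure_union_le _ _) _) _).trans ?_
      have hd : volume diag = 0 := vol_diag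
      have hs1 : volume (sphere (ctr i) S.δ ×ˢ Jb j) = 0 := by
        rw [Measure.volume_eq_prod, Measure.prod_prod, real_sphere_null, zero_mul]
      have hs2 : volume (Jb i ×ˢ sphere (ctr j) S.δ) = 0 := by
        rw [Measure.volume_eq_prod, Measure.prod_prod, real_sphere_null, mul_zero]
      rw [hd, hs1, hs2, add_zero, add_zero, add_zero]
      exact hcorele
    calc c * c * volume (Bad i j ∩ (Jb i ×ˢ Jb j))
        ≤ c * c * (θ n * (ENNReal.ofReal (2*S.δ) * ENNReal.ofReal (2*S.δ))) :=
          mul_le_mul_right hb _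
      _ = θ n * ((c * ENNReal.ofReal (2*S.δ)) * (c * ENNReal.ofReal (2*S.δ))) := by ring
      _ = θ n := by rw [hcancel, one_mul, mul_one]
  have hcard : (Fintype.card ι : ℝ≥0∞) = 2^(n+1) := by
    have : Fintype.card ι = 2^(n+1) := by
      show Fintype.card ((Fin n → Bool) × Bool) = 2^(n+1)
      rw [Fintype.card_prod, Fintype.card_bool, Fintype.card_fun, Fintype.card_bool,
        Fintype.card_fin, pow_succ]
    rw [this]
    push_cast
    rfl
  have hsum : (∑ i : ι, ∑ j : ι, if h : i ≠ j then ((ν i).prod (ν j)) (Bad i j) else 0) < 1 := by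
    have hterm : ∀ i j : ι, (if h : i ≠ j then ((ν i).prod (ν j)) (Bad i j) else 0) ≤ θ n := by
      intro i j
      by_cases h : i ≠ j
      · rw [dif_pos h]; exact hBadLe i j h
      · rw [dif_neg h]; exact zero_le
    have hone : (2:ℝ≥0∞)^(n+1) * (2:ℝ≥0∞)⁻¹^(n+1) = 1 := by
      rw [← mul_pow, ENNReal.mul_inv_cancel two_ne_zero ENNReal.ofNat_ne_top, one_pow]
    have e1 : θ n = (2:ℝ≥0∞)⁻¹^(n+1) * ((2:ℝ≥0∞)⁻¹^(n+1) * 2⁻¹) := by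
      rw [θ, ← pow_succ, ← pow_add]
      congr 1
      omega
    calc (∑ i : ι, ∑ j : ι, if h : i ≠ j then ((ν i).prod (ν j)) (Bad i j) else 0)
        ≤ ∑ _i : ι, ∑ _j : ι, θ n :=
          Finset.sum_le_sum (fun i _ => Finset.sum_le_sum (fun j _ => hterm i j))
      _ = (Fintype.card ι : ℝ≥0∞) * ((Fintype.card ι : ℝ≥0∞) * θ n) := by
          simp [Finset.sum_const, Finset.card_univ, nsmul_eq_mul, mul_assoc]
      _ = ((2:ℝ≥0∞)^(n+1) * (2:ℝ≥0∞)⁻¹^(n+1)) *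
            (((2:ℝ≥0∞)^(n+1) * (2:ℝ≥0∞)⁻¹^(n+1)) * 2⁻¹) := by rw [hcard, e1]; ac_rfl
      _ = 2⁻¹ := by rw [hone, one_mul, one_mul]
      _ < 1 := ENNReal.inv_lt_one.2 ENNReal.one_lt_two
  obtain ⟨g, hg⟩ := exists_tuple ν Bad (fun i j h => hBadMeas i j h) hsum
  -- extraction
  have hext : ∀ i j : ι, i ≠ j → (g i, g j) ∉ core i j ∧ (g i ∈ Jb i ∧ g j ∈ Jb j) ∧
      g i ≠ g j ∧ g i ∉ sphere (ctr i) S.δ ∧ g j ∉ sphere (ctr j) S.δ := by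
    intro i j hij
    have h := hg i j hij
    rw [hBad] at h
    simp only [mem_union, not_or, mem_compl_iff, not_not, Set.mem_prod, mem_univ, and_true,
      true_and, hdiag, mem_setOf_eq] at h
    obtain ⟨⟨⟨⟨h1, h2⟩, h3⟩, h4⟩, h5⟩ := h
    exact ⟨h1, h2, h3, h4, h5⟩
  have hgball : ∀ i : ι, g i ∈ ball (ctr i) S.δ := by
    intro i
    have hne : i ≠ (i.1, !i.2) := by
      intro h
      have := congrArg Prod.snd h
      simp at this
    obtain ⟨-, ⟨h1, -⟩, -, h4, -⟩ := hext i (i.1, !i.2) hne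
    rw [mem_ball]
    rcases lt_or_eq_of_le (mem_closedBall.1 h1) with h | h
    · exact h
    · exact absurd (mem_sphere.2 h) h4
  have hgne : ∀ i j : ι, i ≠ j → g i ≠ g j := fun i j hij => (hext i j hij).2.2.1
  have hAD : ∀ i j : ι, i.1 ≠ j.1 →
      (g i, g j) ∈ A i.1 j.1 ∧ (g i, g j) ∈ Dn i.1 j.1 := by
    intro i j h1
    have hij : i ≠ j := fun h => h1 (congrArg Prod.fst h)
    obtain ⟨hcr, ⟨hJ1, hJ2⟩, -, -, -⟩ := hext i j hij
    have hRect : (g i, g j) ∈ Rect S (rep n i.1) (rep n j.1) := by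
      rw [rect_prod]
      exact ⟨hJ1, hJ2⟩
    rw [hcore] at hcr
    simp only [if_neg h1] at hcr
    have hcr' : (g i, g j) ∉ (Rect S (rep n i.1) (rep n j.1) \ A i.1 j.1) ∪ (A i.1 j.1 \ Dn i.1 j.1) :=
      fun hmem => hcr (subset_toMeasurable _ _ hmem)
    simp only [mem_union, not_or, mem_diff, not_and, not_not] at hcr'
    have hInA : (g i, g j) ∈ A i.1 j.1 := hcr'.1 hRect
    exact ⟨hInA, hcr'.2 hInA⟩
  -- choose δ'
  have hρ : ∀ p : ι × ι, ∃ r₀, 0 < r₀ ∧ (p.1.1 ≠ p.2.1 → ∀ r, 0 < r → r ≤ r₀ →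
      volume (closedBall ((g p.1, g p.2)) r \ A p.1.1 p.2.1)
        ≤ θ (n+1) * volume (closedBall ((g p.1, g p.2)) r)) := by
    intro p
    by_cases hp : p.1.1 ≠ p.2.1
    · obtain ⟨hA', hD'⟩ := hAD p.1 p.2 hp
      obtain ⟨r₀, hr₀, hspec⟩ := dens_loc (hAmeas _ _ hp) hD' (θ_pos (n+1))
      exact ⟨r₀, hr₀, fun _ => hspec⟩
    · exact ⟨1, one_pos, fun h => absurd h hp⟩
  choose ρ hρ0 hρspec using hρ
  set sl : ι → ℝ := fun i => S.δ - dist (g i) (ctr i) with hsl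
  have hslpos : ∀ i, 0 < sl i := fun i => by
    have := hgball i
    rw [mem_ball] at this
    rw [hsl]
    simp only
    linarith
  set D2 : ι × ι → ℝ := fun p => if p.1 = p.2 then 1 else min (dist (g p.1) (g p.2) / 3) (ρ p)
    with hD2
  have hD2pos : ∀ p, 0 < D2 p := by
    intro p
    rw [hD2]
    by_cases h : p.1 = p.2
    · simp [h]
    · simp only [if_neg h]
      refine lt_min ?_ (hρ0 p)
      have := hgne p.1 p.2 h
      have := dist_pos.2 this
      linarith
  set δ' : ℝ := min ((2:ℝ)⁻¹^(n+1)) (min (Finset.univ.inf' Finset.univ_nonempty sl)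
    (Finset.univ.inf' Finset.univ_nonempty D2)) with hδ'
  have hδ'pos : 0 < δ' := by
    rw [hδ']
    refine lt_min (by positivity) (lt_min ?_ ?_)
    · rw [Finset.lt_inf'_iff]
      exact fun i _ => hslpos i
    · rw [Finset.lt_inf'_iff]
      exact fun p _ => hD2pos p
  have hδ'le2 : δ' ≤ (2:ℝ)⁻¹^(n+1) := min_le_left _ _
  have hδ'sl : ∀ i, δ' ≤ sl i := fun i =>
    ((min_le_right _ _).trans (min_le_left _ _)).trans (Finset.inf'_le _ (Finset.mem_univ i))
  have hδ'D2 : ∀ p, δ' ≤ D2 p := fun p =>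
    ((min_le_right _ _).trans (min_le_right _ _)).trans (Finset.inf'_le _ (Finset.mem_univ p))
  have hballsub : ∀ i, closedBall (g i) δ' ⊆ Jb i := by
    intro i
    rw [hJb]
    refine closedBall_subset_closedBall' ?_
    have := hδ'sl i
    rw [hsl] at this
    simp only at this
    linarith
  have hballdisj : ∀ i j : ι, i ≠ j → Disjoint (closedBall (g i) δ') (closedBall (g j) δ') := by
    intro i j hij
    refine closedBall_disjoint_closedBall ?_
    have h1 := hδ'D2 (i, j)
    rw [hD2] at h1
    simp only [if_neg hij] at h1
    have h2 : δ' ≤ dist (g i) (g j) / 3 := h1.trans (min_le_left _ _)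
    have h3 : 0 < dist (g i) (g j) := dist_pos.2 (hgne i j hij)
    linarith
  have hdens' : ∀ i j : ι, i.1 ≠ j.1 →
      volume (closedBall ((g i, g j)) δ' \ A i.1 j.1)
        ≤ θ (n+1) * volume (closedBall ((g i, g j)) δ') := by
    intro i j h1
    have hij : i ≠ j := fun h => h1 (congrArg Prod.fst h)
    refine hρspec (i, j) h1 δ' hδ'pos ?_
    have h2 := hδ'D2 (i, j)
    rw [hD2] at h2
    simp only [if_neg hij] at h2
    exact h2.trans (min_le_right _ _)
  -- choose sibling compacts
  have hKKex : ∀ u : Fin n → Bool, ∀ b : Bool, ∃ K : Set (ℝ × ℝ), IsCompact K ∧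
      K ⊆ closedBall ((g (u, b), g (u, !b))) δ' ∧ K ∩ M = ∅ ∧
      volume (closedBall ((g (u, b), g (u, !b))) δ' \ K)
        ≤ θ (n+1) * volume (closedBall ((g (u, b), g (u, !b))) δ') :=
    fun u b => compact_approx hM hM0 _ hδ'pos (θ_pos (n+1))
  choose KK hKKc hKKs hKKm hKKd using hKKex
  -- define T
  set Ty : (ℕ → Bool) → ℝ := fun v => g (proj n v, v n) with hTy
  set TF : (ℕ → Bool) → (ℕ → Bool) → Set (ℝ × ℝ) := fun v w =>
    if En n v w then (if v n = w n then ∅ else KK (proj n v) (v n)) else S.F v w with hTF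
  have hyS : ∀ v, S.y v = ctr (proj n v, v n) := by
    intro v
    rw [hctr]
    exact inv_y v (rep n (proj n v)) (en_rep_proj n v).symm
  have hnestT : ∀ v : ℕ → Bool, closedBall (Ty v) δ' ⊆ J S v := by
    intro v
    have h1 := hballsub (proj n v, v n)
    rw [hJb] at h1
    rw [J, hyS v]
    exact h1
  have hbit_of : ∀ v w : ℕ → Bool, ¬ En (n+1) v w → En n v w → v n ≠ w n := by
    intro v w hne h hb
    apply hne
    intro i hi
    rcases Nat.lt_succ_iff_lt_or_eq.1 hi with hi' | hieq
    · exact h i hi'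
    · rw [hieq]; exact hb
  refine ⟨⟨Ty, δ', TF⟩, ⟨hδ'pos, hδ'le2, ?_, ?_, ?_, ?_, ?_, ?_, ?_⟩,
    ⟨fun w => hnestT w, fun v w hnen => ?_⟩⟩
  · -- inv_y
    intro v w h
    show Ty v = Ty w
    rw [hTy]
    simp only
    rw [proj_eq_of_en (h.mono n.le_succ), h n (Nat.lt_succ_self n)]
  · -- inv_F
    intro v v' w w' h1 h2
    show TF v w = TF v' w'
    have hv : En n v v' := h1.mono n.le_succ
    have hw : En n w w' := h2.mono n.le_succ
    have hb1 : v n = v' n := h1 n (Nat.lt_succ_self n)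
    have hb2 : w n = w' n := h2 n (Nat.lt_succ_self n)
    rw [hTF]
    simp only
    by_cases h : En n v w
    · have h' : En n v' w' := (hv.symm.trans h).trans hw
      rw [if_pos h, if_pos h']
      by_cases hbb : v n = w n
      · rw [if_pos hbb, if_pos (by rw [← hb1, ← hb2]; exact hbb)]
      · rw [if_neg hbb, if_neg (by rw [← hb1, ← hb2]; exact hbb),
          proj_eq_of_en hv, hb1]
    · have h' : ¬ En n v' w' := fun hh => h ((hv.trans hh).trans hw.symm)
      rw [if_neg h, if_neg h']
      exact inv_F v v' w w' hv hw
  · -- inside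
    intro w
    exact (hnestT w).trans (inside w)
  · -- disj
    intro v w hne
    by_cases h : En n v w
    · have hbit := hbit_of v w hne h
      have hij : ((proj n v, v n) : ι) ≠ (proj n w, w n) := fun hh => hbit (congrArg Prod.snd hh)
      exact hballdisj _ _ hij
    · exact (disj v w h).mono (hnestT v) (hnestT w)
  · -- Fclosed
    intro v w hne
    show IsClosed (TF v w)
    rw [hTF]
    simp only
    by_cases h : En n v w
    · rw [if_pos h, if_neg (hbit_of v w hne h)]
      exact (hKKc _ _).isClosed
    · rw [if_neg h]
      exact Fclosed v w h
  · -- Favoid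
    intro v w hne
    show TF v w ∩ M = ∅
    rw [hTF]
    simp only
    by_cases h : En n v w
    · rw [if_pos h, if_neg (hbit_of v w hne h)]
      exact hKKm _ _
    · rw [if_neg h]
      exact Favoid v w h
  · -- Fdense
    intro v w hne
    show volume (closedBall ((Ty v, Ty w)) δ' \ TF v w)
      ≤ θ (n+1) * volume (closedBall ((Ty v, Ty w)) δ')
    rw [hTF]
    simp only
    by_cases h : En n v w
    · have hbit := hbit_of v w hne h
      have hproj : proj n w = proj n v := (proj_eq_of_en h).symm
      have hwbit : w n = !(v n) := Bool.eq_not_iff.2 (Ne.symm hbit)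
      rw [if_pos h, if_neg hbit]
      have hTyw : (Ty v, Ty w) = (g ((proj n v), v n), g ((proj n v), !(v n))) := by
        rw [hTy]
        simp only
        rw [hproj, hwbit]
      rw [hTyw]
      exact hKKd (proj n v) (v n)
    · rw [if_neg h]
      have hprojne : proj n v ≠ proj n w := fun hh => h (en_of_proj_eq hh)
      have hsubR : closedBall (((g ((proj n v, v n) : ι)), g ((proj n w, w n) : ι))) δ'
          ⊆ Rect S (rep n (proj n v)) (rep n (proj n w)) := by
        rw [← closedBall_prod_same, rect_prod]
        have h1 := hballsub ((proj n v, v n) : ι)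
        have h2 := hballsub ((proj n w, w n) : ι)
        rw [hJb] at h1 h2
        exact Set.prod_mono h1 h2
      have hFS : S.F v w = S.F (rep n (proj n v)) (rep n (proj n w)) :=
        inv_F _ _ _ _ (en_rep_proj n v).symm (en_rep_proj n w).symm
      have hdiffeq : closedBall (((g ((proj n v, v n) : ι)), g ((proj n w, w n) : ι))) δ' \ S.F v w
          = closedBall (((g ((proj n v, v n) : ι)), g ((proj n w, w n) : ι))) δ'
            \ A (proj n v) (proj n w) := by
        rw [hA]
        simp only
        rw [Set.diff_inter, Set.diff_eq_empty.2 hsubR, union_empty, hFS]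
      have hTyv : ((Ty v, Ty w)) = ((g ((proj n v, v n) : ι)), g ((proj n w, w n) : ι)) := rfl
      rw [hTyv, hdiffeq]
      exact hdens' _ _ hprojne
  · -- Ref.Feq
    show TF v w = S.F v w
    rw [hTF]
    simp only
    rw [if_neg hnen]

/-! ### recursion -/

def stages (M : Set (ℝ × ℝ)) (hM : MeasurableSet M) (hM0 : volume M = 0) :
    (n : ℕ) → {S : Stage // Good M n S}
  | 0 => ⟨S0, good_base M⟩
  | n+1 => ⟨(step M hM hM0 n (stages M hM hM0 n).1 (stages M hM hM0 n).2).choose,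
      (step M hM hM0 n (stages M hM hM0 n).1 (stages M hM hM0 n).2).choose_spec.1⟩

variable (M : Set (ℝ × ℝ)) (hM : MeasurableSet M) (hM0 : volume M = 0)

def stg (n : ℕ) : Stage := (stages M hM hM0 n).1

theorem stg_good (n : ℕ) : Good M n (stg M hM hM0 n) := (stages M hM hM0 n).2

theorem refines (n : ℕ) : Ref n (stg M hM hM0 n) (stg M hM hM0 (n+1)) := by
  have h : stg M hM hM0 (n+1)
      = (step M hM hM0 n (stages M hM hM0 n).1 (stages M hM hM0 n).2).choose := by
    rw [stg, stages]
  rw [h, stg]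
  exact (step M hM hM0 n (stages M hM hM0 n).1 (stages M hM hM0 n).2).choose_spec.2

theorem nest_le {m n : ℕ} (hmn : m ≤ n) (w : ℕ → Bool) :
    J (stg M hM hM0 n) w ⊆ J (stg M hM hM0 m) w := by
  induction n, hmn using Nat.le_induction with
  | base => exact subset_rfl
  | succ n hn ih => exact ((refines M hM hM0 n).nest w).trans ih

def Un (n : ℕ) : Set ℝ := ⋃ s : Fin n → Bool, J (stg M hM hM0 n) (rep n s)

def Pset : Set ℝ := ⋂ n, Un M hM hM0 n

theorem J_sub_Un (n : ℕ) (w : ℕ → Bool) : J (stg M hM hM0 n) w ⊆ Un M hM hM0 n := by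
  have h : J (stg M hM hM0 n) w = J (stg M hM hM0 n) (rep n (proj n w)) := by
    rw [J, J, (stg_good M hM hM0 n).inv_y w (rep n (proj n w)) (en_rep_proj n w).symm]
  rw [h]
  exact subset_iUnion (fun s : Fin n → Bool => J (stg M hM hM0 n) (rep n s)) (proj n w)

theorem Un_subset (n : ℕ) : Un M hM hM0 n ⊆ Icc (0:ℝ) 1 :=
  iUnion_subset fun s => (stg_good M hM hM0 n).inside _

theorem Pset_subset : Pset M hM hM0 ⊆ Icc (0:ℝ) 1 :=
  (iInter_subset _ 0).trans (Un_subset M hM hM0 0)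

theorem Pset_closed : IsClosed (Pset M hM hM0) :=
  isClosed_iInter fun n => isClosed_iUnion_of_finite fun s => Metric.isClosed_closedBall

theorem Pset_inter_nonempty (n : ℕ) (w : ℕ → Bool) :
    (Pset M hM hM0 ∩ J (stg M hM hM0 n) w).Nonempty := by
  set C : ℕ → Set ℝ := fun k => J (stg M hM hM0 (n+k)) w with hC
  have hdec : ∀ k, C (k+1) ⊆ C k := fun k => (refines M hM hM0 (n+k)).nest w
  have hne : ∀ k, (C k).Nonempty :=
    fun k => ⟨_, mem_closedBall_self (stg_good M hM hM0 (n+k)).δpos.le⟩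
  have hcomp : IsCompact (C 0) := isCompact_closedBall _ _
  have hclosed : ∀ k, IsClosed (C k) := fun k => Metric.isClosed_closedBall
  obtain ⟨x, hx⟩ := IsCompact.nonempty_iInter_of_sequence_nonempty_isCompact_isClosed
    C hdec hne hcomp hclosed
  rw [mem_iInter] at hx
  refine ⟨x, ?_, hx 0⟩
  rw [Pset, mem_iInter]
  intro m
  rcases le_total m n with h | h
  · exact J_sub_Un M hM hM0 m w (nest_le M hM hM0 h w (hx 0))
  · obtain ⟨k, rfl⟩ : ∃ k, m = n + k := ⟨m - n, (Nat.add_sub_cancel' h).symm⟩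
    exact J_sub_Un M hM hM0 (n+k) w (hx k)

theorem Pset_nonempty : (Pset M hM hM0).Nonempty := by
  obtain ⟨x, hx, -⟩ := Pset_inter_nonempty M hM hM0 0 (fun _ => false)
  exact ⟨x, hx⟩

theorem node_of {x : ℝ} (hx : x ∈ Pset M hM hM0) (n : ℕ) :
    ∃ w, x ∈ J (stg M hM hM0 n) w := by
  have h := mem_iInter.1 hx n
  rcases mem_iUnion.1 h with ⟨s, hs⟩
  exact ⟨rep n s, hs⟩

theorem en_of_mem {x : ℝ} {n : ℕ} {v w : ℕ → Bool}
    (hv : x ∈ J (stg M hM hM0 n) v) (hw : x ∈ J (stg M hM hM0 n) w) : En n v w := by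
  by_contra hc
  exact Set.disjoint_left.1 ((stg_good M hM hM0 n).disj v w hc) hv hw

theorem pair_avoid {x y : ℝ} (hx : x ∈ Pset M hM hM0) (hy : y ∈ Pset M hM hM0)
    (hxy : x ≠ y) : (x, y) ∉ M := by
  choose vx hvx using fun m => node_of M hM hM0 hx m
  choose vy hvy using fun m => node_of M hM hM0 hy m
  have hdist : 0 < dist x y := dist_pos.2 hxy
  obtain ⟨m₀, hm₀⟩ : ∃ m₀ : ℕ, (2:ℝ)⁻¹^m₀ * 2 < dist x y := by
    obtain ⟨m, hm⟩ := exists_pow_lt_of_lt_one (by positivity : (0:ℝ) < dist x y / 2)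
      (by norm_num : (2:ℝ)⁻¹ < 1)
    exact ⟨m, by linarith⟩
  have hpowmono : ∀ {a b : ℕ}, a ≤ b → ((2:ℝ)⁻¹)^b ≤ ((2:ℝ)⁻¹)^a :=
    fun h => pow_le_pow_of_le_one (by norm_num) (by norm_num) h
  have hsep : ∀ n, m₀ ≤ n → ¬ En n (vx n) (vy n) := by
    intro n hn hEn
    have h1 : (stg M hM hM0 n).y (vx n) = (stg M hM hM0 n).y (vy n) :=
      (stg_good M hM hM0 n).inv_y _ _ hEn
    have h2 := hvx n
    have h3 := hvy n
    rw [J, mem_closedBall] at h2 h3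
    rw [h1] at h2
    have hd : dist x y ≤ 2 * (stg M hM hM0 n).δ := by
      calc dist x y ≤ dist x ((stg M hM hM0 n).y (vy n)) + dist y ((stg M hM hM0 n).y (vy n)) :=
            dist_triangle_right x y _
        _ ≤ _ + _ := add_le_add h2 h3
        _ = 2 * (stg M hM hM0 n).δ := by ring
    have hδ := (stg_good M hM hM0 n).δle
    have := hpowmono hn
    linarith
  have hen_x : ∀ n, En n (vx (n+1)) (vx n) := fun n =>
    en_of_mem M hM hM0 ((refines M hM hM0 n).nest _ (hvx (n+1))) (hvx n)
  have hen_y : ∀ n, En n (vy (n+1)) (vy n) := fun n =>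
    en_of_mem M hM hM0 ((refines M hM hM0 n).nest _ (hvy (n+1))) (hvy n)
  set Fs := (stg M hM hM0 m₀).F (vx m₀) (vy m₀) with hFs
  have hstab : ∀ n, m₀ ≤ n → (stg M hM hM0 n).F (vx n) (vy n) = Fs := by
    intro n hn
    induction n, hn using Nat.le_induction with
    | base => rfl
    | succ n hn ih =>
      have hnen1 : ¬ En n (vx (n+1)) (vy (n+1)) := by
        intro hc
        exact hsep n hn (((hen_x n).symm.trans hc).trans (hen_y n))
      rw [(refines M hM hM0 n).Feq _ _ hnen1,
        (stg_good M hM hM0 n).inv_F _ _ _ _ (hen_x n) (hen_y n)]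
      exact ih
  have hFsclosed : IsClosed Fs := (stg_good M hM hM0 m₀).Fclosed _ _ (hsep m₀ le_rfl)
  have hFsM : Fs ∩ M = ∅ := (stg_good M hM hM0 m₀).Favoid _ _ (hsep m₀ le_rfl)
  have hmem : (x, y) ∈ Fs := by
    rw [← hFsclosed.closure_eq, Metric.mem_closure_iff]
    intro ε hε
    obtain ⟨m, hmm₀, hmε⟩ : ∃ m : ℕ, m₀ ≤ m ∧ (2:ℝ)⁻¹^m * 2 < ε := by
      obtain ⟨m₁, hm₁⟩ := exists_pow_lt_of_lt_one (by positivity : (0:ℝ) < ε / 2)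
        (by norm_num : (2:ℝ)⁻¹ < 1)
      refine ⟨max m₀ m₁, le_max_left _ _, ?_⟩
      have := hpowmono (le_max_right m₀ m₁)
      linarith
    have hδm := (stg_good M hM hM0 m).δle
    have hδmpos := (stg_good M hM hM0 m).δpos
    have hne : (Rect (stg M hM hM0 m) (vx m) (vy m) ∩ (stg M hM hM0 m).F (vx m) (vy m)).Nonempty := by
      by_contra hcon
      rw [Set.not_nonempty_iff_eq_empty] at hcon
      have hR : Rect (stg M hM hM0 m) (vx m) (vy m) \ (stg M hM hM0 m).F (vx m) (vy m)
          = Rect (stg M hM hM0 m) (vx m) (vy m) := by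
        apply sdiff_eq_self_iff_disjoint.2
        rw [Set.disjoint_left]
        intro p hp1 hp2
        rw [Set.eq_empty_iff_forall_notMem] at hcon
        exact absurd ⟨hp2, hp1⟩ (hcon p)
      have hle := (stg_good M hM hM0 m).Fdense _ _ (hsep m hmm₀)
      rw [hR] at hle
      have hv0 : 0 < volume (Rect (stg M hM hM0 m) (vx m) (vy m)) := by
        rw [Rect]; exact vol_ball2_pos _ hδmpos
      have hvt : volume (Rect (stg M hM hM0 m) (vx m) (vy m)) ≠ ⊤ := by
        rw [Rect]; exact vol_ball2_ne_top _ _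
      have hlt : θ m * volume (Rect (stg M hM hM0 m) (vx m) (vy m))
          < volume (Rect (stg M hM hM0 m) (vx m) (vy m)) := by
        calc θ m * volume (Rect (stg M hM hM0 m) (vx m) (vy m))
            < 1 * volume (Rect (stg M hM hM0 m) (vx m) (vy m)) := by
              exact ENNReal.mul_lt_mul_left hv0.ne' hvt (θ_lt_one m)
          _ = _ := one_mul _
      exact absurd (hle.trans_lt hlt) (lt_irrefl _)
    obtain ⟨p, hpR, hpF⟩ := hne
    refine ⟨p, by rw [hstab m hmm₀] at hpF; exact hpF, ?_⟩
    have hxyR : ((x, y) : ℝ × ℝ) ∈ Rect (stg M hM hM0 m) (vx m) (vy m) := by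
      rw [rect_prod]
      exact ⟨hvx m, hvy m⟩
    have h1 : dist ((x,y) : ℝ × ℝ) (((stg M hM hM0 m).y (vx m), (stg M hM hM0 m).y (vy m)))
        ≤ (stg M hM hM0 m).δ := mem_closedBall.1 hxyR
    have h2 : dist p (((stg M hM hM0 m).y (vx m), (stg M hM hM0 m).y (vy m)))
        ≤ (stg M hM hM0 m).δ := mem_closedBall.1 hpR
    have hp2 := hpowmono hmm₀
    calc dist ((x,y) : ℝ × ℝ) p
        ≤ dist ((x,y) : ℝ × ℝ) (((stg M hM hM0 m).y (vx m), (stg M hM hM0 m).y (vy m)))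
          + dist p (((stg M hM hM0 m).y (vx m), (stg M hM hM0 m).y (vy m))) :=
          dist_triangle_right _ _ _
      _ ≤ (stg M hM hM0 m).δ + (stg M hM hM0 m).δ := add_le_add h1 h2
      _ < ε := by linarith
  intro hxyM
  rw [Set.eq_empty_iff_forall_notMem] at hFsM
  exact hFsM (x, y) ⟨hmem, hxyM⟩

theorem acc_point {x : ℝ} (hx : x ∈ Pset M hM hM0) {ε : ℝ} (hε : 0 < ε) :
    ∃ z ∈ Pset M hM hM0, z ≠ x ∧ dist z x < ε := by
  obtain ⟨m, hmε⟩ : ∃ m : ℕ, (2:ℝ)⁻¹^m * 2 < ε := by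
    obtain ⟨m, hm⟩ := exists_pow_lt_of_lt_one (by positivity : (0:ℝ) < ε / 2)
      (by norm_num : (2:ℝ)⁻¹ < 1)
    exact ⟨m, by linarith⟩
  obtain ⟨v, hv⟩ := node_of M hM hM0 hx (m+1)
  set w : ℕ → Bool := fun i => if i = m then !(v i) else v i with hw
  have henw : En m v w := by
    intro i hi
    rw [hw]
    simp only [if_neg (Nat.ne_of_lt hi)]
  have hnenw : ¬ En (m+1) v w := by
    intro hc
    have := hc m (Nat.lt_succ_self m)
    rw [hw] at this
    simp at this
  obtain ⟨z, hzP, hzJ⟩ := Pset_inter_nonempty M hM hM0 (m+1) w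
  refine ⟨z, hzP, ?_, ?_⟩
  · intro hzx
    rw [hzx] at hzJ
    exact hnenw (en_of_mem M hM hM0 hv hzJ)
  · have h1 : z ∈ J (stg M hM hM0 m) w := (refines M hM hM0 m).nest w hzJ
    have h2 : x ∈ J (stg M hM hM0 m) v := (refines M hM hM0 m).nest v hv
    have hyy : (stg M hM hM0 m).y w = (stg M hM hM0 m).y v :=
      (stg_good M hM hM0 m).inv_y w v henw.symm
    rw [J, mem_closedBall] at h1 h2
    rw [hyy] at h1
    have hδm := (stg_good M hM hM0 m).δle
    have hδmpos := (stg_good M hM hM0 m).δpos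
    calc dist z x ≤ dist z ((stg M hM hM0 m).y v) + dist x ((stg M hM hM0 m).y v) :=
          dist_triangle_right z x _
      _ ≤ (stg M hM hM0 m).δ + (stg M hM hM0 m).δ := add_le_add h1 h2
      _ < ε := by
          have : (stg M hM hM0 m).δ ≤ (2:ℝ)⁻¹^m := hδm
          linarith

end Myc
end

/-- **Two-dimensional Mycielski theorem, measure case.**
For every set `X ⊆ [0,1] × [0,1]` of full two-dimensional Lebesgue measure there exists a
perfect set `P ⊆ [0,1]` (nonempty, closed and without isolated points) with `P × P ⊆ X ∪ Δ`. -/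
theorem mycielski_measure (X : Set (I × I)) (hX : volume Xᶜ = 0) :
    ∃ P : Set I, P.Nonempty ∧ Perfect P ∧
      ∀ x ∈ P, ∀ y ∈ P, x ≠ y → (x, y) ∈ X := by
  classical
  set M : Set (ℝ × ℝ) :=
    toMeasurable volume (Prod.map (Subtype.val : I → ℝ) Subtype.val '' Xᶜ) with hMdef
  have hM : MeasurableSet M := measurableSet_toMeasurable _ _
  have hM0 : volume M = 0 := by
    rw [hMdef, measure_toMeasurable]
    exact null_image hX
  set Pr := Myc.Pset M hM hM0 with hPr
  have hsub : Pr ⊆ Icc (0:ℝ) 1 := Myc.Pset_subset M hM hM0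
  refine ⟨{z : I | (z : ℝ) ∈ Pr}, ?_, ⟨?_, ?_⟩, ?_⟩
  · obtain ⟨x, hx⟩ := Myc.Pset_nonempty M hM hM0
    exact ⟨⟨x, hsub hx⟩, hx⟩
  · exact (Myc.Pset_closed M hM hM0).preimage continuous_subtype_val
  · rw [preperfect_iff_nhds]
    intro x hx U hU
    obtain ⟨ε, hε, hball⟩ := Metric.mem_nhds_iff.1 hU
    obtain ⟨z, hzP, hzx, hzd⟩ := Myc.acc_point M hM hM0 hx hε
    refine ⟨⟨z, hsub hzP⟩, ⟨hball ?_, hzP⟩, ?_⟩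
    · rw [Metric.mem_ball, Subtype.dist_eq]
      exact hzd
    · intro h
      exact hzx (congrArg Subtype.val h)
  · intro x hx y hy hxy
    by_contra hmem
    have hvalne : (x : ℝ) ≠ (y : ℝ) := fun h => hxy (Subtype.ext h)
    have havoid := Myc.pair_avoid M hM hM0 hx hy hvalne
    apply havoid
    rw [hMdef]
    apply subset_toMeasurable
    exact ⟨(x, y), hmem, rfl⟩
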